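/- arXiv:2501.01022 — 6 statements merged into one kernel-verified Lean document; each statement's English description precedes it below -/
import Mathlib

section
/- A component C ∈ S_y(ŷ₋) is negatively critical if and only if there exists A ∈ S(y ∩ N(C)) with C ⊆ A such that either (1) A = C, or (2) there exist vertices v₀, v_k ∈ A \ C that lie in distinct connected components of the segment graph of y on N(C) \ C (equivalently, there is no path from v₀ to v_k inside N(C) through same-label edges of G all of whose intermediate vertices avoid C). -/
/-- The "segment graph" of a labeling `y`: vertices adjacent in `G` with equal labels. -/
def segGraph {V : Type*} (G : SimpleGraph V) (y : V → ℕ) : SimpleGraph V where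
  Adj i j := G.Adj i j ∧ y i = y j
  symm := ⟨fun _ _ h => ⟨h.1.symm, h.2.symm⟩⟩
  loopless := ⟨fun i h => G.loopless.irrefl i h.1⟩

/-- The connected components of the subgraph of `H` induced on the vertex set `S`,
viewed as subsets of the ambient vertex type. -/
def comps {V : Type*} (H : SimpleGraph V) (S : Set V) : Set (Set V) :=
  { C | ∃ K : (H.induce S).ConnectedComponent, C = Subtype.val '' K.supp }

/-- `S(y ∩ W)`: connected components of the segment graph of `y` on `F(y) ∩ W`. -/
def segComps {V : Type*} (G : SimpleGraph V) (y : V → ℕ) (W : Set V) : Set (Set V) :=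
  comps (segGraph G y) ({i | y i ≠ 0} ∩ W)

/-- The closed neighborhood `N(C)` of a vertex set `C`. -/
def nbhd {V : Type*} (G : SimpleGraph V) (C : Set V) : Set V :=
  C ∪ {i | ∃ j ∈ C, G.Adj i j}

/-- The labeling `y ⊖ C`: agrees with `y` off `C` and is `0` on `C`. -/
noncomputable def removeLbl {V : Type*} (y : V → ℕ) (C : Set V) : V → ℕ :=
  Cᶜ.indicator y

/-- The false negative mask `M₋`. -/
def fnMask {V : Type*} (y yhat : V → ℕ) : Set V := {i | y i ≠ 0 ∧ yhat i = 0}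

/-- The false positive mask `M₊`. -/
def fpMask {V : Type*} (y yhat : V → ℕ) : Set V := {i | yhat i ≠ 0 ∧ y i = 0}

/-- `S_y(ŷ₋)`: components of the graph on `M₋` with edges `{i,j} ∈ E(G)` such that `y i = y j`. -/
def maskCompsNeg {V : Type*} (G : SimpleGraph V) (y yhat : V → ℕ) : Set (Set V) :=
  comps (segGraph G y) (fnMask y yhat)

/-- `S_y(ŷ₊)`: components of the graph on `M₊` with edges `{i,j} ∈ E(G)` such that `ŷ i = ŷ j`. -/
def maskCompsPos {V : Type*} (G : SimpleGraph V) (y yhat : V → ℕ) : Set (Set V) :=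
  comps (segGraph G yhat) (fpMask y yhat)

/-- `C` is negatively critical (w.r.t. labeling `y`):
`|S(y ∩ N(C))| ≠ |S((y⊖C) ∩ N(C))|`. -/
def negCritical {V : Type*} (G : SimpleGraph V) (y : V → ℕ) (C : Set V) : Prop :=
  Nat.card ↥(segComps G y (nbhd G C))
    ≠ Nat.card ↥(segComps G (removeLbl y C) (nbhd G C))

/-- `C` is positively critical (w.r.t. prediction `yhat`):
`|S(ŷ ∩ N(C))| ≠ |S((ŷ⊖C) ∩ N(C))|`. -/
def posCritical {V : Type*} (G : SimpleGraph V) (yhat : V → ℕ) (C : Set V) : Prop :=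
  Nat.card ↥(segComps G yhat (nbhd G C))
    ≠ Nat.card ↥(segComps G (removeLbl yhat C) (nbhd G C))


section Aux
open SimpleGraph

variable {V : Type*} {H H' : SimpleGraph V} {S T : Set V}

lemma comps_subset {C : Set V} (h : C ∈ comps H S) : C ⊆ S := by
  obtain ⟨K, rfl⟩ := h
  rintro _ ⟨⟨v, hv⟩, -, rfl⟩; exact hv

lemma comps_nonempty {C : Set V} (h : C ∈ comps H S) : C.Nonempty := by
  obtain ⟨K, rfl⟩ := h
  obtain ⟨v, hv⟩ := K.exists_rep
  exact ⟨v, v, by rw [ConnectedComponent.mem_supp_iff]; exact hv, rfl⟩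

lemma mem_comps_self (v : V) (hv : v ∈ S) :
    Subtype.val '' ((H.induce S).connectedComponentMk ⟨v, hv⟩).supp ∈ comps H S ∧
      v ∈ Subtype.val '' ((H.induce S).connectedComponentMk ⟨v, hv⟩).supp :=
  ⟨⟨_, rfl⟩, ⟨⟨v, hv⟩, by rw [ConnectedComponent.mem_supp_iff], rfl⟩⟩

lemma comps_eq_of_mem {C₁ C₂ : Set V} (h1 : C₁ ∈ comps H S) (h2 : C₂ ∈ comps H S)
    {v : V} (hv1 : v ∈ C₁) (hv2 : v ∈ C₂) : C₁ = C₂ := by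
  obtain ⟨K₁, rfl⟩ := h1
  obtain ⟨K₂, rfl⟩ := h2
  obtain ⟨u₁, hu₁, hval₁⟩ := hv1
  obtain ⟨u₂, hu₂, hval₂⟩ := hv2
  have : u₁ = u₂ := Subtype.ext (hval₁.trans hval₂.symm)
  subst this
  rw [ConnectedComponent.mem_supp_iff] at hu₁ hu₂
  rw [hu₁.symm.trans hu₂]

/-- Transfer a walk in `induce T` whose vertices all lie in `S` to reachability in `induce S`. -/
lemma walk_transfer : ∀ {a b : T} (w : (H.induce T).Walk a b)
    (_ : ∀ v ∈ w.support, ↑v ∈ S) (ha : (a : V) ∈ S) (hb : (b : V) ∈ S),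
    (H.induce S).Reachable ⟨a, ha⟩ ⟨b, hb⟩ := by
  intro a b w
  induction w with
  | nil => intro _ _ _; rfl
  | cons h w ih =>
      intro hS ha hb
      have hc : (_ : V) ∈ S := hS _
        (by rw [SimpleGraph.Walk.support_cons]; exact List.mem_cons_of_mem _ w.start_mem_support)
      have hadj : (H.induce S).Adj ⟨_, ha⟩ ⟨_, hc⟩ := by
        simp only [comap_adj] at h ⊢; exact h
      exact hadj.reachable.trans
        (ih (fun v hv => hS v
          (by rw [SimpleGraph.Walk.support_cons]; exact List.mem_cons_of_mem _ hv)) hc hb)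

/-- A component of `comps H S` contained in `T` is contained in some component of `comps H T`. -/
lemma comp_subset_comp {K : Set V} (hK : K ∈ comps H S) (hKT : K ⊆ T) :
    ∃ B ∈ comps H T, K ⊆ B := by
  classical
  obtain ⟨v, hvK⟩ := comps_nonempty hK
  have hvT : v ∈ T := hKT hvK
  refine ⟨_, (mem_comps_self (H := H) v hvT).1, ?_⟩
  obtain ⟨Kc, rfl⟩ := hK
  obtain ⟨v', hv', hvv⟩ := hvK
  rw [ConnectedComponent.mem_supp_iff] at hv'
  rintro _ ⟨u', hu', rfl⟩
  rw [ConnectedComponent.mem_supp_iff] at hu'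
  obtain ⟨w⟩ := ConnectedComponent.eq.mp (hv'.trans hu'.symm)
  have hsupp : ∀ x ∈ w.support, (x : V) ∈ T := by
    intro x hx
    apply hKT
    refine ⟨x, ?_, rfl⟩
    rw [ConnectedComponent.mem_supp_iff, ← hv']
    exact ConnectedComponent.eq.mpr (w.takeUntil x hx).reachable.symm
  have hr := walk_transfer (S := T) w hsupp (hsupp _ w.start_mem_support) (hsupp _ w.end_mem_support)
  refine ⟨⟨(u' : V), hsupp _ w.end_mem_support⟩, ?_, rfl⟩
  rw [ConnectedComponent.mem_supp_iff, ConnectedComponent.eq]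
  have hst : (⟨(v' : V), hsupp _ w.start_mem_support⟩ : T) = ⟨v, hvT⟩ := Subtype.ext hvv
  rw [← hst]
  exact hr.symm

/-- A component of the larger set lying inside the smaller set is a component of the smaller set. -/
lemma comp_mem_of_subset {B : Set V} (hB : B ∈ comps H T) (hST : S ⊆ T) (hBS : B ⊆ S) :
    B ∈ comps H S := by
  classical
  obtain ⟨v, hvB⟩ := comps_nonempty hB
  have hvS : v ∈ S := hBS hvB
  suffices h : B = Subtype.val '' ((H.induce S).connectedComponentMk ⟨v, hvS⟩).supp by
    rw [h]; exact (mem_comps_self (H := H) v hvS).1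
  apply Set.Subset.antisymm
  · obtain ⟨Kc, rfl⟩ := hB
    obtain ⟨v', hv', hvv⟩ := hvB
    rw [ConnectedComponent.mem_supp_iff] at hv'
    rintro _ ⟨u', hu', rfl⟩
    rw [ConnectedComponent.mem_supp_iff] at hu'
    obtain ⟨w⟩ := ConnectedComponent.eq.mp (hv'.trans hu'.symm)
    have hsupp : ∀ x ∈ w.support, (x : V) ∈ S := by
      intro x hx
      apply hBS
      refine ⟨x, ?_, rfl⟩
      rw [ConnectedComponent.mem_supp_iff, ← hv']
      exact ConnectedComponent.eq.mpr (w.takeUntil x hx).reachable.symm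
    have hr := walk_transfer (S := S) w hsupp (hsupp _ w.start_mem_support) (hsupp _ w.end_mem_support)
    refine ⟨⟨(u' : V), hsupp _ w.end_mem_support⟩, ?_, rfl⟩
    rw [ConnectedComponent.mem_supp_iff, ConnectedComponent.eq]
    have hst : (⟨(v' : V), hsupp _ w.start_mem_support⟩ : S) = ⟨v, hvS⟩ := Subtype.ext hvv
    rw [← hst]
    exact hr.symm
  · rintro _ ⟨u', hu', rfl⟩
    rw [ConnectedComponent.mem_supp_iff] at hu'
    obtain ⟨w⟩ := ConnectedComponent.eq.mp hu'
    have hr := walk_transfer (S := T) w (fun x _ => hST x.2) (hST u'.2) (hST hvS)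
    obtain ⟨Kc, hKc⟩ := hB
    obtain ⟨v', hv', hvv⟩ := hKc ▸ hvB
    rw [ConnectedComponent.mem_supp_iff] at hv'
    rw [hKc]
    refine ⟨⟨(u' : V), hST u'.2⟩, ?_, rfl⟩
    rw [ConnectedComponent.mem_supp_iff, ← hv', ConnectedComponent.eq]
    have hst : (⟨((⟨v, hvS⟩ : S) : V), hST hvS⟩ : T) = v' := Subtype.ext hvv.symm
    rw [← hst] at *
    exact hr

lemma comps_congr (h : ∀ i ∈ S, ∀ j ∈ S, (H.Adj i j ↔ H'.Adj i j)) :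
    comps H S = comps H' S := by
  have hind : H.induce S = H'.induce S := by
    ext a b
    exact h a a.2 b b.2
  unfold comps
  rw [hind]

end Aux

/-- A component `C ∈ S_y(ŷ₋)` is negatively critical iff there exists
`A ∈ S(y ∩ N(C))` with `C ⊆ A` such that either (1) `A = C`, or (2) there exist
`v₀, vₖ ∈ A \ C` lying in distinct connected components of the segment graph of `y`
on `N(C) \ C`. -/
theorem stmt2 {V : Type*} [Fintype V] (G : SimpleGraph V) (y yhat : V → ℕ)
    (C : Set V) (hC : C ∈ maskCompsNeg G y yhat) :
    negCritical G y C ↔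
      ∃ A ∈ segComps G y (nbhd G C), C ⊆ A ∧
        (A = C ∨
          ∃ v₀ vₖ : V, v₀ ∈ A \ C ∧ vₖ ∈ A \ C ∧
            ∃ K₁ ∈ segComps G y (nbhd G C \ C), ∃ K₂ ∈ segComps G y (nbhd G C \ C),
              K₁ ≠ K₂ ∧ v₀ ∈ K₁ ∧ vₖ ∈ K₂) := by
  classical
  set N : Set V := nbhd G C with hNdef
  set F : Set V := {i | y i ≠ 0} with hFdef
  set HG : SimpleGraph V := segGraph G y with hHG
  -- basic facts about C
  have hCsub : C ⊆ fnMask y yhat := comps_subset hC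
  have hCF : C ⊆ F := fun i hi => (hCsub hi).1
  have hCN : C ⊆ N := Set.subset_union_left
  have hCne : C.Nonempty := comps_nonempty hC
  have hCFN : C ⊆ F ∩ N := fun i hi => ⟨hCF hi, hCN hi⟩
  -- the distinguished component A containing C
  obtain ⟨A, hA, hCA⟩ := comp_subset_comp hC hCFN
  have hAsub : A ⊆ F ∩ N := comps_subset hA
  set big : Set (Set V) := comps HG (F ∩ N) with hbigdef
  set small : Set (Set V) := comps HG (F ∩ (N \ C)) with hsmalldef
  have hsub : F ∩ (N \ C) ⊆ F ∩ N := fun i hi => ⟨hi.1, hi.2.1⟩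
  have hsegN : segComps G y N = big := rfl
  have hsegNC : segComps G y (N \ C) = small := rfl
  -- segComps of removeLbl equals small
  have hrem : segComps G (removeLbl y C) N = small := by
    have hset : {i | removeLbl y C i ≠ 0} ∩ N = F ∩ (N \ C) := by
      ext i
      simp only [Set.mem_inter_iff, Set.mem_setOf_eq, Set.mem_diff, removeLbl,
        Set.indicator_apply, Set.mem_compl_iff, hFdef]
      by_cases hiC : i ∈ C <;> simp [hiC]
    show comps (segGraph G (removeLbl y C)) ({i | removeLbl y C i ≠ 0} ∩ N) = _
    rw [hset]
    apply comps_congr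
    intro i hi j hj
    have hi' : removeLbl y C i = y i := Set.indicator_of_mem (by exact hi.2.2) y
    have hj' : removeLbl y C j = y j := Set.indicator_of_mem (by exact hj.2.2) y
    constructor
    · rintro ⟨h1, h2⟩; exact ⟨h1, by rwa [hi', hj'] at h2⟩
    · rintro ⟨h1, h2⟩; exact ⟨h1, by rwa [hi', hj']⟩
  -- the pieces: small components inside A \ C
  set pieces : Set (Set V) := {P | P ∈ small ∧ P ⊆ A \ C} with hpdef
  -- every small component inside A is a piece
  have f1 : ∀ P ∈ small, P ⊆ A → P ∈ pieces := by
    intro P hP hPA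
    refine ⟨hP, fun x hx => ⟨hPA hx, ?_⟩⟩
    exact (comps_subset hP hx).2.2
  -- big components other than A avoid C and are small components
  have f2 : ∀ B ∈ big, B ≠ A → B ∈ small := by
    intro B hB hBA
    have hBC : ∀ x ∈ B, x ∉ C := by
      intro x hxB hxC
      exact hBA (comps_eq_of_mem hB hA hxB (hCA hxC))
    have hBS : B ⊆ F ∩ (N \ C) := by
      intro x hx
      exact ⟨(comps_subset hB hx).1, (comps_subset hB hx).2, hBC x hx⟩
    exact comp_mem_of_subset hB hsub hBS
  -- each small component containing a vertex of A \ C is a piece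
  have f6 : ∀ K ∈ small, ∀ v ∈ K, v ∈ A \ C → K ∈ pieces := by
    intro K hK v hvK hvA
    obtain ⟨B, hB, hKB⟩ := comp_subset_comp hK ((comps_subset hK).trans hsub)
    have hBA : B = A := comps_eq_of_mem hB hA (hKB hvK) hvA.1
    exact f1 K hK (hBA ▸ hKB)
  -- every vertex of A \ C lies in some piece
  have f5 : ∀ v ∈ A \ C, ∃ P ∈ pieces, v ∈ P := by
    intro v hv
    have hvS : v ∈ F ∩ (N \ C) := ⟨(hAsub hv.1).1, (hAsub hv.1).2, hv.2⟩
    obtain ⟨hPmem, hvP⟩ := mem_comps_self (H := HG) v hvS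
    exact ⟨_, f6 _ hPmem v hvP hv, hvP⟩
  -- structure of small
  have f3 : small = (big \ {A}) ∪ pieces := by
    apply Set.Subset.antisymm
    · intro P hP
      obtain ⟨B, hB, hPB⟩ := comp_subset_comp hP ((comps_subset hP).trans hsub)
      by_cases hBA : B = A
      · exact Or.inr (f1 P hP (hBA ▸ hPB))
      · have hBsmall : B ∈ small := f2 B hB hBA
        obtain ⟨x, hx⟩ := comps_nonempty hP
        have hPB' : P = B := comps_eq_of_mem hP hBsmall hx (hPB hx)
        rw [hPB']
        exact Or.inl ⟨hB, hBA⟩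
    · intro P hP
      rcases hP with ⟨hPbig, hPA⟩ | hPp
      · exact f2 P hPbig (by simpa using hPA)
      · exact hPp.1
  have f4 : Disjoint (big \ {A}) pieces := by
    rw [Set.disjoint_left]
    rintro B ⟨hBbig, hBA⟩ hBp
    obtain ⟨x, hx⟩ := comps_nonempty hBp.1
    have : B = A := comps_eq_of_mem hBbig hA hx (hBp.2 hx).1
    exact hBA this
  -- counting
  have hbigcard : Nat.card ↥(segComps G y N) = (big \ {A}).ncard + 1 := by
    rw [hsegN, Nat.card_coe_set_eq]
    have : big = insert A (big \ {A}) := by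
      rw [Set.insert_diff_singleton, Set.insert_eq_self.mpr hA]
    conv_lhs => rw [this]
    rw [Set.ncard_insert_of_notMem (by simp) (Set.toFinite _)]
  have hsmallcard :
      Nat.card ↥(segComps G (removeLbl y C) N) = (big \ {A}).ncard + pieces.ncard := by
    rw [hrem, Nat.card_coe_set_eq, f3,
      Set.ncard_union_eq f4 (Set.toFinite _) (Set.toFinite _)]
  have hcrit : negCritical G y C ↔ pieces.ncard ≠ 1 := by
    rw [negCritical]
    show Nat.card ↥(segComps G y N) ≠ Nat.card ↥(segComps G (removeLbl y C) N) ↔ _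
    rw [hbigcard, hsmallcard]
    omega
  rw [hcrit]
  constructor
  · intro ht
    refine ⟨A, hA, hCA, ?_⟩
    rcases Nat.lt_or_ge pieces.ncard 1 with h1 | h1
    · -- pieces empty, so A = C
      have hpe : pieces = ∅ := by
        rw [← Set.ncard_eq_zero (Set.toFinite _)]; omega
      left
      apply Set.Subset.antisymm _ hCA
      intro v hvA
      by_contra hvC
      obtain ⟨P, hP, _⟩ := f5 v ⟨hvA, hvC⟩
      simp [hpe] at hP
    · have h2 : 1 < pieces.ncard := lt_of_le_of_ne h1 (Ne.symm ht)
      rw [Set.one_lt_ncard_iff (Set.toFinite _)] at h2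
      obtain ⟨P₁, P₂, hP₁, hP₂, hne⟩ := h2
      obtain ⟨v₀, hv₀⟩ := comps_nonempty hP₁.1
      obtain ⟨vₖ, hvₖ⟩ := comps_nonempty hP₂.1
      exact Or.inr ⟨v₀, vₖ, hP₁.2 hv₀, hP₂.2 hvₖ,
        P₁, hP₁.1, P₂, hP₂.1, hne, hv₀, hvₖ⟩
  · rintro ⟨A', hA', hCA', hcase⟩
    obtain ⟨c₀, hc₀⟩ := hCne
    have hAA : A' = A := comps_eq_of_mem hA' hA (hCA' hc₀) (hCA hc₀)
    subst hAA
    rcases hcase with hAC | ⟨v₀, vₖ, hv₀, hvₖ, K₁, hK₁, K₂, hK₂, hKne, hv₀K, hvₖK⟩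
    · -- pieces empty
      have hpe : pieces = ∅ := by
        ext P
        simp only [Set.mem_empty_iff_false, iff_false]
        intro hP
        obtain ⟨x, hx⟩ := comps_nonempty hP.1
        have := hP.2 hx
        rw [hAC] at this
        exact this.2 this.1
      rw [hpe, Set.ncard_empty]
      omega
    · have h1 : K₁ ∈ pieces := f6 K₁ hK₁ v₀ hv₀K hv₀
      have h2 : K₂ ∈ pieces := f6 K₂ hK₂ vₖ hvₖK hvₖ
      have : 1 < pieces.ncard :=
        (Set.one_lt_ncard_iff (Set.toFinite _)).mpr ⟨K₁, K₂, h1, h2, hKne⟩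
      omega
end

section
/- A component C ∈ S_y(ŷ₊) is positively critical if and only if there exists A ∈ S(ŷ ∩ N(C)) with C ⊆ A such that either (1) A = C, or (2) there exist vertices v₀, v_k ∈ A \ C that lie in distinct connected components of the segment graph of ŷ on N(C) \ C (equivalently, there is no path from v₀ to v_k inside N(C) through same-label edges of G all of whose intermediate vertices avoid C). -/
open SimpleGraph

/-- distinct components have distinct vertex-set images -/
lemma comps_inj {V : Type*} {H : SimpleGraph V} {S : Set V}
    (K L : (H.induce S).ConnectedComponent)
    (h : Subtype.val '' K.supp = Subtype.val '' L.supp) : K = L := by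
  obtain ⟨u, hu⟩ := K.exists_rep
  have huK : (u : V) ∈ Subtype.val '' K.supp :=
    ⟨u, (ConnectedComponent.mem_supp_iff K u).2 hu, rfl⟩
  rw [h] at huK
  obtain ⟨b, hb, hbv⟩ := huK
  have hbu : b = u := Subtype.ext hbv
  subst hbu
  rw [← hu]
  exact (ConnectedComponent.mem_supp_iff L b).1 hb

/-- transfer a walk in an induced subgraph to another induced subgraph containing its support -/
lemma reach_transfer {V : Type*} {H : SimpleGraph V} {S T : Set V} :
    ∀ {u v : S} (w : (H.induce S).Walk u v),
      (∀ x ∈ w.support, (x : V) ∈ T) →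
      ∀ (hu : (u : V) ∈ T) (hv : (v : V) ∈ T),
        (H.induce T).Reachable ⟨u, hu⟩ ⟨v, hv⟩ := by
  intro u v w
  induction w with
  | nil => intro _ hu hv; exact Reachable.refl _
  | @cons a b c h p ih =>
      intro hsup hu hv
      have hb : (b : V) ∈ T := hsup b (by simp)
      have hstep : (H.induce T).Adj ⟨(a : V), hu⟩ ⟨(b : V), hb⟩ := h
      exact hstep.reachable.trans (ih (fun x hx => hsup x (by simp [hx])) hb hv)

lemma mk_eq_of_mem_support {V : Type*} {G : SimpleGraph V} {u v x : V}
    (w : G.Walk u v) (hx : x ∈ w.support) :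
    G.connectedComponentMk x = G.connectedComponentMk u := by
  classical
  exact ConnectedComponent.sound ((w.takeUntil x hx).reachable.symm)

lemma card_comps {V : Type*} [Fintype V] (H : SimpleGraph V) (S : Set V) :
    Nat.card ↥(comps H S) = Nat.card (H.induce S).ConnectedComponent := by
  refine (Nat.card_eq_of_bijective
    (fun K : (H.induce S).ConnectedComponent => (⟨Subtype.val '' K.supp, ⟨K, rfl⟩⟩ : ↥(comps H S)))
    ⟨?_, ?_⟩).symm
  · intro K L h
    exact comps_inj K L (congrArg Subtype.val h)
  · rintro ⟨s, K, rfl⟩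
    exact ⟨K, rfl⟩

lemma comps_congr_s3 {V : Type*} {H₁ H₂ : SimpleGraph V} {S T : Set V}
    (hST : S = T) (h : ∀ i ∈ T, ∀ j ∈ T, (H₁.Adj i j ↔ H₂.Adj i j)) :
    comps H₁ S = comps H₂ T := by
  subst hST
  have hind : H₁.induce S = H₂.induce S := by
    ext a b
    exact h a a.2 b b.2
  unfold comps
  rw [hind]

/-- A component `C ∈ S_y(ŷ₊)` is positively critical iff there exists
`A ∈ S(ŷ ∩ N(C))` with `C ⊆ A` such that either (1) `A = C`, or (2) there exist
`v₀, vₖ ∈ A \ C` lying in distinct connected components of the segment graph of `ŷ`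
on `N(C) \ C`. -/
theorem stmt3 {V : Type*} [Fintype V] (G : SimpleGraph V) (y yhat : V → ℕ)
    (C : Set V) (hC : C ∈ maskCompsPos G y yhat) :
    posCritical G yhat C ↔
      ∃ A ∈ segComps G yhat (nbhd G C), C ⊆ A ∧
        (A = C ∨
          ∃ v₀ vₖ : V, v₀ ∈ A \ C ∧ vₖ ∈ A \ C ∧
            ∃ K₁ ∈ segComps G yhat (nbhd G C \ C), ∃ K₂ ∈ segComps G yhat (nbhd G C \ C),
              K₁ ≠ K₂ ∧ v₀ ∈ K₁ ∧ vₖ ∈ K₂) := by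
  classical
  set H := segGraph G yhat with hH
  set W := nbhd G C with hWdef
  set X : Set V := {i | yhat i ≠ 0} ∩ W with hXdef
  set X' : Set V := {i | yhat i ≠ 0} ∩ (W \ C) with hX'def
  obtain ⟨K₀, hK₀⟩ := hC
  have hCsub : C ⊆ fpMask y yhat := by
    rintro x hx
    rw [hK₀] at hx
    obtain ⟨a, _, rfl⟩ := hx
    exact a.2
  have hCW : C ⊆ W := fun x hx => Set.mem_union_left _ hx
  have hCX : C ⊆ X := fun x hx => ⟨(hCsub hx).1, hCW hx⟩
  have hX'X : X' ⊆ X := fun x hx => ⟨hx.1, hx.2.1⟩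
  have hXdiff : ∀ x, x ∈ X → x ∉ C → x ∈ X' := fun x hx hxc => ⟨hx.1, hx.2, hxc⟩
  have hX'nC : ∀ x : V, x ∈ X' → x ∉ C := fun x hx => hx.2.2
  obtain ⟨u₀, hu₀⟩ := K₀.exists_rep
  have hu₀' : (H.induce (fpMask y yhat)).connectedComponentMk u₀ = K₀ := hu₀
  have hc₀ : (u₀ : V) ∈ C := by
    rw [hK₀]
    exact ⟨u₀, (ConnectedComponent.mem_supp_iff _ _).2 hu₀', rfl⟩
  set c₀ : V := (u₀ : V) with hc₀def
  -- connectivity of C inside `H.induce X`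
  have hCreach : ∀ x ∈ C, ∀ z ∈ C, ∀ (hx : x ∈ X) (hz : z ∈ X),
      (H.induce X).Reachable ⟨x, hx⟩ ⟨z, hz⟩ := by
    intro x hx z hz hxX hzX
    rw [hK₀] at hx hz
    obtain ⟨a, ha, rfl⟩ := hx
    obtain ⟨b, hb, rfl⟩ := hz
    rw [ConnectedComponent.mem_supp_iff] at ha hb
    have hr : (H.induce (fpMask y yhat)).Reachable a b :=
      ConnectedComponent.exact (ha.trans hb.symm)
    obtain ⟨w⟩ := hr
    refine reach_transfer w ?_ hxX hzX
    intro p hp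
    refine hCX ?_
    rw [hK₀]
    refine ⟨p, ?_, rfl⟩
    rw [ConnectedComponent.mem_supp_iff, mk_eq_of_mem_support w hp]
    exact ha
  -- the inclusion homomorphism and induced map on components
  let ι : H.induce X' →g H.induce X := ⟨fun a => ⟨a.1, hX'X a.2⟩, fun {a b} h => h⟩
  set φ : (H.induce X').ConnectedComponent → (H.induce X).ConnectedComponent :=
    ConnectedComponent.map ι with hφdef
  set A₀ : (H.induce X).ConnectedComponent :=
    (H.induce X).connectedComponentMk ⟨c₀, hCX hc₀⟩ with hA₀def
  have hφmk : ∀ (u : ↥X'), φ ((H.induce X').connectedComponentMk u)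
      = (H.induce X).connectedComponentMk ⟨u.1, hX'X u.2⟩ := fun u =>
    ConnectedComponent.map_mk ι u
  have hφmk' : ∀ (v : V) (h' : v ∈ X') (h : v ∈ X),
      φ ((H.induce X').connectedComponentMk ⟨v, h'⟩)
        = (H.induce X).connectedComponentMk ⟨v, h⟩ := by
    intro v h' h
    rw [hφmk]
  have hmkC : ∀ (x : ↥X), (x : V) ∈ C → (H.induce X).connectedComponentMk x = A₀ :=
    fun x hx => ConnectedComponent.sound (hCreach _ hx _ hc₀ x.2 (hCX hc₀))
  have hCA : C ⊆ Subtype.val '' A₀.supp := fun x hx =>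
    ⟨⟨x, hCX hx⟩, (ConnectedComponent.mem_supp_iff _ _).2 (hmkC ⟨x, hCX hx⟩ hx), rfl⟩
  -- surjectivity onto components other than A₀
  have hsurj : ∀ B, B ≠ A₀ → ∃ K, φ K = B := by
    intro B hB
    obtain ⟨x, hx⟩ := B.exists_rep
    have hxC : (x : V) ∉ C := fun h => hB (by rw [← hx]; exact hmkC x h)
    refine ⟨(H.induce X').connectedComponentMk ⟨(x : V), hXdiff _ x.2 hxC⟩, ?_⟩
    rw [hφmk' _ _ x.2]
    exact hx
  -- injectivity away from A₀
  have hinj : ∀ K₁ K₂, φ K₁ = φ K₂ → φ K₁ ≠ A₀ → K₁ = K₂ := by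
    intro K₁ K₂ heq hne
    obtain ⟨u₁, hu₁⟩ := K₁.exists_rep
    obtain ⟨u₂, hu₂⟩ := K₂.exists_rep
    have hu₁' : (H.induce X').connectedComponentMk u₁ = K₁ := hu₁
    have hu₂' : (H.induce X').connectedComponentMk u₂ = K₂ := hu₂
    have h1 : φ K₁ = (H.induce X).connectedComponentMk ⟨u₁.1, hX'X u₁.2⟩ := by
      rw [← hu₁', hφmk]
    have h2 : φ K₂ = (H.induce X).connectedComponentMk ⟨u₂.1, hX'X u₂.2⟩ := by
      rw [← hu₂', hφmk]
    have hr : (H.induce X).Reachable ⟨u₁.1, hX'X u₁.2⟩ ⟨u₂.1, hX'X u₂.2⟩ :=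
      ConnectedComponent.exact (by rw [← h1, ← h2]; exact heq)
    obtain ⟨w⟩ := hr
    have hsupp : ∀ p ∈ w.support, ((p : ↥X) : V) ∈ X' := by
      intro p hp
      refine hXdiff _ p.2 ?_
      intro hpC
      apply hne
      rw [h1, ← mk_eq_of_mem_support w hp]
      exact hmkC p hpC
    have hres := reach_transfer w hsupp u₁.2 u₂.2
    rw [← hu₁', ← hu₂']
    exact ConnectedComponent.sound hres
  -- fiber characterizations
  have to_fiber : ∀ v (_ : v ∈ Subtype.val '' A₀.supp) (hvC : v ∉ C),
      ∃ h' : v ∈ X', φ ((H.induce X').connectedComponentMk ⟨v, h'⟩) = A₀ := by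
    intro v hA hvC
    obtain ⟨a, ha, rfl⟩ := hA
    have h' : (a : V) ∈ X' := hXdiff _ a.2 hvC
    refine ⟨h', ?_⟩
    rw [hφmk' _ h' a.2]
    exact (ConnectedComponent.mem_supp_iff _ _).1 ha
  have from_fiber : ∀ (u : ↥X'), φ ((H.induce X').connectedComponentMk u) = A₀ →
      (u : V) ∈ Subtype.val '' A₀.supp ∧ (u : V) ∉ C := by
    intro u h
    rw [hφmk] at h
    exact ⟨⟨⟨u.1, hX'X u.2⟩, (ConnectedComponent.mem_supp_iff _ _).2 h, rfl⟩, hX'nC _ u.2⟩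
  -- cardinality bookkeeping
  have hX'card : Nat.card (H.induce X').ConnectedComponent
      = Nat.card {K : (H.induce X').ConnectedComponent // φ K = A₀}
        + Nat.card {B : (H.induce X).ConnectedComponent // ¬ B = A₀} := by
    have e1 := Nat.card_congr (Equiv.sumCompl (fun K : (H.induce X').ConnectedComponent =>
      φ K = A₀)).symm
    rw [Nat.card_sum] at e1
    rw [e1]
    congr 1
    refine Nat.card_eq_of_bijective
      (fun K : {K : (H.induce X').ConnectedComponent // ¬ φ K = A₀} =>
        (⟨φ K.1, K.2⟩ : {B : (H.induce X).ConnectedComponent // ¬ B = A₀})) ⟨?_, ?_⟩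
    · rintro ⟨K₁, h₁⟩ ⟨K₂, h₂⟩ h
      exact Subtype.ext (hinj K₁ K₂ (congrArg Subtype.val h) h₁)
    · rintro ⟨B, hB⟩
      obtain ⟨K, hK⟩ := hsurj B hB
      exact ⟨⟨K, by rw [hK]; exact hB⟩, Subtype.ext hK⟩
  have hXcard : Nat.card (H.induce X).ConnectedComponent
      = 1 + Nat.card {B : (H.induce X).ConnectedComponent // ¬ B = A₀} := by
    have e1 := Nat.card_congr (Equiv.sumCompl (fun B : (H.induce X).ConnectedComponent =>
      B = A₀)).symm
    rw [Nat.card_sum] at e1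
    rw [e1]
    congr 1
    haveI : Unique {B : (H.induce X).ConnectedComponent // B = A₀} :=
      ⟨⟨⟨A₀, rfl⟩⟩, fun b => Subtype.ext b.2⟩
    exact Nat.card_unique
  have hremval : ∀ i, i ∉ C → removeLbl yhat C i = yhat i := fun i hi =>
    Set.indicator_of_mem (by exact hi) yhat
  have hrem0 : ∀ i, removeLbl yhat C i ≠ 0 ↔ (yhat i ≠ 0 ∧ i ∉ C) := by
    intro i
    by_cases hi : i ∈ C
    · simp [removeLbl, Set.indicator_of_notMem, hi]
    · simp [hremval i hi, hi]
  have hcrit : posCritical G yhat C ↔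
      Nat.card {K : (H.induce X').ConnectedComponent // φ K = A₀} ≠ 1 := by
    unfold posCritical
    have e₁ : segComps G yhat (nbhd G C) = comps H X := rfl
    have e₂ : segComps G (removeLbl yhat C) (nbhd G C) = comps H X' := by
      refine comps_congr_s3 ?_ ?_
      · ext i
        simp only [Set.mem_inter_iff, Set.mem_setOf_eq, Set.mem_diff, hrem0]
        constructor
        · rintro ⟨⟨h1, h2⟩, h3⟩; exact ⟨h1, (show i ∈ W from h3), h2⟩
        · rintro ⟨h1, h2, h3⟩; exact ⟨⟨h1, h3⟩, h2⟩
      · intro i hi j hj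
        show (G.Adj i j ∧ removeLbl yhat C i = removeLbl yhat C j) ↔
          (G.Adj i j ∧ yhat i = yhat j)
        rw [hremval i (hX'nC _ hi), hremval j (hX'nC _ hj)]
    rw [e₁, e₂, card_comps, card_comps, hXcard, hX'card]
    omega
  rw [hcrit]
  constructor
  · -- criticality → structural characterization
    intro hm
    refine ⟨Subtype.val '' A₀.supp, ⟨A₀, rfl⟩, hCA, ?_⟩
    rcases Nat.lt_or_ge (Nat.card {K : (H.induce X').ConnectedComponent // φ K = A₀}) 2
      with h2 | h2
    · -- the fiber over A₀ is empty : A = C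
      have hm0 : Nat.card {K : (H.induce X').ConnectedComponent // φ K = A₀} = 0 := by omega
      left
      refine Set.Subset.antisymm ?_ hCA
      intro v hv
      by_contra hvC
      obtain ⟨h', hφv⟩ := to_fiber v hv hvC
      have hne0 : Nat.card {K : (H.induce X').ConnectedComponent // φ K = A₀} ≠ 0 :=
        Nat.card_ne_zero.2 ⟨⟨⟨_, hφv⟩⟩, inferInstance⟩
      exact hne0 hm0
    · -- the fiber over A₀ has at least two elements
      right
      have hnt : Nontrivial {K : (H.induce X').ConnectedComponent // φ K = A₀} :=
        Finite.one_lt_card_iff_nontrivial.1 (by omega)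
      obtain ⟨⟨K₁, h₁⟩, ⟨K₂, h₂⟩, hne⟩ := hnt
      obtain ⟨u₁, hu₁⟩ := K₁.exists_rep
      obtain ⟨u₂, hu₂⟩ := K₂.exists_rep
      have hu₁' : (H.induce X').connectedComponentMk u₁ = K₁ := hu₁
      have hu₂' : (H.induce X').connectedComponentMk u₂ = K₂ := hu₂
      have hf₁ := from_fiber u₁ (by rw [hu₁']; exact h₁)
      have hf₂ := from_fiber u₂ (by rw [hu₂']; exact h₂)
      refine ⟨u₁.1, u₂.1, ⟨hf₁.1, hf₁.2⟩, ⟨hf₂.1, hf₂.2⟩,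
        Subtype.val '' K₁.supp, ⟨K₁, rfl⟩, Subtype.val '' K₂.supp, ⟨K₂, rfl⟩, ?_, ?_, ?_⟩
      · intro h
        apply hne
        apply Subtype.ext
        exact comps_inj _ _ h
      · exact ⟨u₁, (ConnectedComponent.mem_supp_iff _ _).2 hu₁', rfl⟩
      · exact ⟨u₂, (ConnectedComponent.mem_supp_iff _ _).2 hu₂', rfl⟩
  · -- structural characterization → criticality
    rintro ⟨A', hA'mem, hCA', hcase⟩ hm1
    obtain ⟨B, rfl⟩ := hA'mem
    have hBA₀ : B = A₀ := by
      obtain ⟨a, ha, hav⟩ := hCA' hc₀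
      have h1 : (H.induce X).connectedComponentMk a = B :=
        (ConnectedComponent.mem_supp_iff _ _).1 ha
      have h2 : (a : V) ∈ C := by rw [hav]; exact hc₀
      rw [← h1]
      exact hmkC a h2
    subst hBA₀
    rcases hcase with hAC | ⟨v₀, vₖ, hv₀, hvₖ, K₁s, hK₁s, K₂s, hK₂s, hne, hv₁, hv₂⟩
    · -- A = C forces an empty fiber, contradicting card = 1
      have hne0 : Nat.card {K : (H.induce X').ConnectedComponent // φ K = A₀} ≠ 0 := by
        omega
      obtain ⟨⟨K, hK⟩⟩ := (Nat.card_ne_zero.1 hne0).1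
      obtain ⟨u, hu⟩ := K.exists_rep
      have hu' : (H.induce X').connectedComponentMk u = K := hu
      have hf := from_fiber u (by rw [hu']; exact hK)
      exact hf.2 (hAC ▸ hf.1)
    · -- two vertices in distinct components give a nontrivial fiber
      obtain ⟨L₁, rfl⟩ := hK₁s
      obtain ⟨L₂, rfl⟩ := hK₂s
      obtain ⟨a₁, ha₁, rfl⟩ := hv₁
      obtain ⟨a₂, ha₂, rfl⟩ := hv₂
      have hφL₁ : φ L₁ = A₀ := by
        have hL₁ : (H.induce X').connectedComponentMk a₁ = L₁ :=
          (ConnectedComponent.mem_supp_iff _ _).1 ha₁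
        rw [← hL₁, hφmk]
        obtain ⟨b, hb, hbv⟩ := hv₀.1
        have hba : (⟨(a₁ : V), hX'X a₁.2⟩ : ↥X) = b := Subtype.ext hbv.symm
        rw [hba]
        exact (ConnectedComponent.mem_supp_iff _ _).1 hb
      have hφL₂ : φ L₂ = A₀ := by
        have hL₂ : (H.induce X').connectedComponentMk a₂ = L₂ :=
          (ConnectedComponent.mem_supp_iff _ _).1 ha₂
        rw [← hL₂, hφmk]
        obtain ⟨b, hb, hbv⟩ := hvₖ.1
        have hba : (⟨(a₂ : V), hX'X a₂.2⟩ : ↥X) = b := Subtype.ext hbv.symm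
        rw [hba]
        exact (ConnectedComponent.mem_supp_iff _ _).1 hb
      have hL₁₂ : L₁ ≠ L₂ := fun h => hne (by rw [h])
      have hnt : Nontrivial {K : (H.induce X').ConnectedComponent // φ K = A₀} :=
        ⟨⟨L₁, hφL₁⟩, ⟨L₂, hφL₂⟩, fun h => hL₁₂ (congrArg Subtype.val h)⟩
      have := Finite.one_lt_card_iff_nontrivial.2 hnt
      omega
end

section
/- Let C ∈ S_y(ŷ₋) and let A ∈ S(y) with C ⊆ A. Then there exist vertices v₀, v_k ∈ A \ C lying in distinct connected components of the segment graph of y on A \ C if and only if there exist distinct B′₁, B′₂ ∈ S(y⊖C) with B′₁, B′₂ ⊆ A such that the subgraph of G induced on B′₁ ∪ C ∪ B′₂ is connected. -/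
namespace Stmt8Aux

variable {V : Type*}

def RW (H : SimpleGraph V) (S : Set V) (u v : V) : Prop :=
  ∃ (hu : u ∈ S) (hv : v ∈ S), (H.induce S).Reachable ⟨u, hu⟩ ⟨v, hv⟩

variable {H H' : SimpleGraph V} {S T : Set V} {u v x : V}

lemma RW.mem_left (h : RW H S u v) : u ∈ S := h.1
lemma RW.mem_right (h : RW H S u v) : v ∈ S := h.2.1

lemma RW.refl (hu : u ∈ S) : RW H S u u := ⟨hu, hu, .refl _⟩

lemma RW.symm (h : RW H S u v) : RW H S v u := ⟨h.2.1, h.1, h.2.2.symm⟩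

lemma RW.trans (h : RW H S u v) (h' : RW H S v x) : RW H S u x :=
  ⟨h.1, h'.2.1, h.2.2.trans h'.2.2⟩

lemma RW.adj (h : H.Adj u v) (hu : u ∈ S) (hv : v ∈ S) : RW H S u v :=
  ⟨hu, hv, SimpleGraph.Adj.reachable (by exact h)⟩

lemma RW.ind (h : RW H S u v) (P : V → Prop) (base : P u)
    (step : ∀ a b, P a → a ∈ S → b ∈ S → H.Adj a b → P b) : P v := by
  obtain ⟨hu, hv, hr⟩ := h
  obtain ⟨w⟩ := hr
  suffices hgen : ∀ (a b : S) (_ : (H.induce S).Walk a b), P a.1 → P b.1 from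
    hgen _ _ w base
  intro a b w
  induction w with
  | nil => exact id
  | @cons a x b hadj p ih =>
      intro ha
      exact ih (step a.1 x.1 ha a.2 x.2 (by exact hadj))

lemma RW.mono (hH : H ≤ H') (hS : S ⊆ T) (h : RW H S u v) : RW H' T u v := by
  refine h.ind (fun b => RW H' T u b) (.refl (hS h.mem_left)) ?_
  intro a b hPa ha hb hadj
  exact hPa.trans (RW.adj (hH hadj) (hS ha) (hS hb))

lemma RW.restrict (h : RW H S u v) : RW H {w | RW H S w v} u v := by
  have key : RW H S u v ∧ RW H {w | RW H S w v} u v := by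
    refine h.symm.ind (fun b => RW H S b v ∧ RW H {w | RW H S w v} b v)
      ⟨.refl h.mem_right, .refl (RW.refl h.mem_right)⟩ ?_
    intro a b hPa ha hb hadj
    have hbv : RW H S b v := (RW.adj hadj.symm hb ha).trans hPa.1
    exact ⟨hbv, (RW.adj hadj.symm (show b ∈ {w | RW H S w v} from hbv)
      (show a ∈ {w | RW H S w v} from hPa.1)).trans hPa.2⟩
  exact key.2

lemma comp_rep (h : RW H S v u) :
    {w | RW H S w u} = {w | RW H S w v} := by
  ext w
  exact ⟨fun hw => hw.trans h.symm, fun hw => hw.trans h⟩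

lemma mem_comps_iff {B : Set V} :
    B ∈ comps H S ↔ ∃ v, ∃ _ : v ∈ S, B = {w | RW H S w v} := by
  constructor
  · rintro ⟨K, rfl⟩
    obtain ⟨⟨v, hv⟩, rfl⟩ := K.exists_rep
    refine ⟨v, hv, ?_⟩
    ext w
    simp only [Set.mem_image, SimpleGraph.ConnectedComponent.mem_supp_iff,
      Set.mem_setOf_eq]
    constructor
    · rintro ⟨⟨w', hw⟩, h, rfl⟩
      exact ⟨hw, hv, (SimpleGraph.ConnectedComponent.eq).mp h⟩
    · rintro ⟨hw, _, hr⟩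
      exact ⟨⟨w, hw⟩, (SimpleGraph.ConnectedComponent.eq).mpr hr, rfl⟩
  · rintro ⟨v, hv, rfl⟩
    refine ⟨(H.induce S).connectedComponentMk ⟨v, hv⟩, ?_⟩
    ext w
    simp only [Set.mem_setOf_eq, Set.mem_image,
      SimpleGraph.ConnectedComponent.mem_supp_iff]
    constructor
    · rintro ⟨hw, _, hr⟩
      exact ⟨⟨w, hw⟩, (SimpleGraph.ConnectedComponent.eq).mpr hr, rfl⟩
    · rintro ⟨⟨w', hw⟩, h, rfl⟩
      exact ⟨hw, hv, (SimpleGraph.ConnectedComponent.eq).mp h⟩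

end Stmt8Aux

open Stmt8Aux

/-- Let `C ∈ S_y(ŷ₋)` and `A ∈ S(y)` with `C ⊆ A`.  Then there exist
`v₀, vₖ ∈ A \ C` lying in distinct connected components of the segment graph of `y`
on `A \ C` iff there exist distinct `B′₁, B′₂ ∈ S(y⊖C)` with `B′₁, B′₂ ⊆ A` such that
the subgraph of `G` induced on `B′₁ ∪ C ∪ B′₂` is connected. -/
theorem stmt8 {V : Type*} [Fintype V] (G : SimpleGraph V) (y yhat : V → ℕ)
    (C : Set V) (hC : C ∈ maskCompsNeg G y yhat)
    (A : Set V) (hA : A ∈ segComps G y Set.univ) (hCA : C ⊆ A) :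
    (∃ v₀ vₖ : V, v₀ ∈ A \ C ∧ vₖ ∈ A \ C ∧
        ∃ K₁ ∈ segComps G y (A \ C), ∃ K₂ ∈ segComps G y (A \ C),
          K₁ ≠ K₂ ∧ v₀ ∈ K₁ ∧ vₖ ∈ K₂) ↔
      ∃ B₁ ∈ segComps G (removeLbl y C) Set.univ,
        ∃ B₂ ∈ segComps G (removeLbl y C) Set.univ,
          B₁ ≠ B₂ ∧ B₁ ⊆ A ∧ B₂ ⊆ A ∧ (G.induce (B₁ ∪ C ∪ B₂)).Connected := by
  classical
  set Gy := segGraph G y with hGyDef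
  set F : Set V := {i | y i ≠ 0} with hFDef
  set y' := removeLbl y C with hy'Def
  set Gy' := segGraph G y' with hGy'Def
  set F' : Set V := {i | y' i ≠ 0} with hF'Def
  set M : Set V := fnMask y yhat with hMDef
  -- basic facts about y'
  have hy'eq : ∀ i ∉ C, y' i = y i := by
    intro i hi
    simp [hy'Def, removeLbl, Set.indicator_apply, hi]
  have hF'eq : ∀ i, i ∈ F' ↔ i ∈ F ∧ i ∉ C := by
    intro i
    by_cases hi : i ∈ C
    · simp [hF'Def, hy'Def, removeLbl, Set.indicator_apply, hi, hFDef]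
    · simp [hF'Def, hy'Def, removeLbl, Set.indicator_apply, hi, hFDef]
  have hAdj' : ∀ {i j : V}, i ∉ C → j ∉ C → (Gy'.Adj i j ↔ Gy.Adj i j) := by
    intro i j hi hj
    simp only [hGy'Def, hGyDef, segGraph, hy'eq i hi, hy'eq j hj]
  -- decompose A and C
  obtain ⟨a, haF, hAeq⟩ := (mem_comps_iff).mp hA
  obtain ⟨c, hcM, hCeq⟩ := (mem_comps_iff).mp hC
  have hcC : c ∈ C := by rw [hCeq]; exact RW.refl hcM
  have hAF : A ⊆ F := by
    intro x hx
    rw [hAeq] at hx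
    exact hx.mem_left.1
  have hAc : ∀ u ∈ A, ∀ w ∈ F, Gy.Adj u w → w ∈ A := by
    intro u hu w hw hadj
    rw [hAeq] at hu ⊢
    exact (RW.adj (S := F ∩ Set.univ) hadj.symm ⟨hw, trivial⟩
      ⟨hAF (hAeq ▸ hu : u ∈ A), trivial⟩).trans hu
  have hGyG : Gy ≤ G := by intro i j h; exact h.1
  -- the component correspondence
  have hL2 : ∀ r ∈ A \ C, {w | RW Gy' (F' ∩ Set.univ) w r} = {w | RW Gy (F ∩ (A \ C)) w r} := by
    intro r hr
    have hrF : r ∈ F := hAF hr.1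
    have hrS : r ∈ F ∩ (A \ C) := ⟨hrF, hr⟩
    have hrS' : r ∈ F' ∩ Set.univ := ⟨(hF'eq r).mpr ⟨hrF, hr.2⟩, trivial⟩
    ext w
    simp only [Set.mem_setOf_eq]
    constructor
    · intro h
      have key : w ∈ A \ C ∧ RW Gy (F ∩ (A \ C)) w r := by
        refine h.symm.ind (fun b => b ∈ A \ C ∧ RW Gy (F ∩ (A \ C)) b r)
          ⟨hr, RW.refl hrS⟩ ?_
        intro p q hPp hp hq hadj
        have hpC : p ∉ C := ((hF'eq p).mp hp.1).2
        have hqC : q ∉ C := ((hF'eq q).mp hq.1).2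
        have hqF : q ∈ F := ((hF'eq q).mp hq.1).1
        have hadjy : Gy.Adj p q := (hAdj' hpC hqC).mp hadj
        have hqA : q ∈ A := hAc p hPp.1.1 q hqF hadjy
        exact ⟨⟨hqA, hqC⟩,
          (RW.adj (S := F ∩ (A \ C)) hadjy.symm ⟨hqF, hqA, hqC⟩ ⟨hAF hPp.1.1, hPp.1⟩).trans hPp.2⟩
      exact key.2
    · intro h
      refine h.ind (fun b => RW Gy' (F' ∩ Set.univ) w b)
        (RW.refl ⟨(hF'eq w).mpr ⟨h.mem_left.1, h.mem_left.2.2⟩, trivial⟩) ?_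
      intro p q hPp hp hq hadj
      have hadj' : Gy'.Adj p q := (hAdj' hp.2.2 hq.2.2).mpr hadj
      exact hPp.trans (RW.adj hadj' ⟨(hF'eq p).mpr ⟨hp.1, hp.2.2⟩, trivial⟩
        ⟨(hF'eq q).mpr ⟨hq.1, hq.2.2⟩, trivial⟩)
  -- the crossing lemma
  have hL3 : ∀ v ∈ A \ C, ∃ u u', RW Gy (F ∩ (A \ C)) v u ∧ u' ∈ C ∧ G.Adj u u' := by
    intro v hv
    have hcA : c ∈ A := hCA hcC
    have hvc : RW Gy (F ∩ Set.univ) v c := by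
      have h1 : RW Gy (F ∩ Set.univ) v a := by rw [hAeq] at hv; exact hv.1
      have h2 : RW Gy (F ∩ Set.univ) c a := by rw [hAeq] at hcA; exact hcA
      exact h1.trans h2.symm
    have key := hvc.ind
      (fun b => (∃ u u', RW Gy (F ∩ (A \ C)) v u ∧ u' ∈ C ∧ G.Adj u u') ∨
        (b ∈ A \ C ∧ RW Gy (F ∩ (A \ C)) v b))
      (Or.inr ⟨hv, RW.refl ⟨hAF hv.1, hv⟩⟩) ?_
    · rcases key with h | h
      · exact h
      · exact absurd hcC h.1.2
    · intro p q hPp hp hq hadj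
      rcases hPp with h | h
      · exact Or.inl h
      · have hqA : q ∈ A := hAc p h.1.1 q hq.1 hadj
        by_cases hqC : q ∈ C
        · exact Or.inl ⟨p, q, h.2, hqC, hadj.1⟩
        · exact Or.inr ⟨⟨hqA, hqC⟩,
            h.2.trans (RW.adj hadj ⟨hAF h.1.1, h.1⟩ ⟨hq.1, hqA, hqC⟩)⟩
  constructor
  · -- forward
    rintro ⟨v₀, vₖ, hv₀, hvₖ, K₁, hK₁, K₂, hK₂, hne, hv₀K, hvₖK⟩
    obtain ⟨r₁, hr₁, hK₁eq⟩ := (mem_comps_iff).mp hK₁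
    obtain ⟨r₂, hr₂, hK₂eq⟩ := (mem_comps_iff).mp hK₂
    have hr₁A : r₁ ∈ A \ C := hr₁.2
    have hr₂A : r₂ ∈ A \ C := hr₂.2
    have hK₁' : K₁ = {w | RW Gy' (F' ∩ Set.univ) w r₁} := by rw [hK₁eq, hL2 r₁ hr₁A]
    have hK₂' : K₂ = {w | RW Gy' (F' ∩ Set.univ) w r₂} := by rw [hK₂eq, hL2 r₂ hr₂A]
    have hK₁sub : K₁ ⊆ A := by
      intro w hw; rw [hK₁eq] at hw; exact hw.mem_left.2.1
    have hK₂sub : K₂ ⊆ A := by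
      intro w hw; rw [hK₂eq] at hw; exact hw.mem_left.2.1
    refine ⟨K₁, ?_, K₂, ?_, hne, hK₁sub, hK₂sub, ?_⟩
    · exact (mem_comps_iff).mpr ⟨r₁, ⟨(hF'eq r₁).mpr ⟨hr₁.1, hr₁A.2⟩, trivial⟩, hK₁'⟩
    · exact (mem_comps_iff).mpr ⟨r₂, ⟨(hF'eq r₂).mpr ⟨hr₂.1, hr₂A.2⟩, trivial⟩, hK₂'⟩
    · -- connectivity of K₁ ∪ C ∪ K₂
      set T : Set V := K₁ ∪ C ∪ K₂ with hTdef
      have hK₁T : K₁ ⊆ T := fun x hx => Or.inl (Or.inl hx)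
      have hCT : C ⊆ T := fun x hx => Or.inl (Or.inr hx)
      have hK₂T : K₂ ⊆ T := fun x hx => Or.inr hx
      have hCcase : ∀ x ∈ C, RW G T x c := by
        intro x hx
        have h1 : RW Gy M x c := by rw [hCeq] at hx; exact hx
        have h2 : RW Gy {w | RW Gy M w c} x c := h1.restrict
        rw [← hCeq] at h2
        exact h2.mono hGyG hCT
      have hKcase : ∀ (K : Set V) (r : V), r ∈ F ∩ (A \ C) →
          K = {w | RW Gy (F ∩ (A \ C)) w r} → K ⊆ T → ∀ x ∈ K, RW G T x c := by
        intro K r hr hKeq hKT x hx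
        have hxr : RW Gy (F ∩ (A \ C)) x r := by rw [hKeq] at hx; exact hx
        have hxr' : RW Gy K x r := by
          have := hxr.restrict; rwa [← hKeq] at this
        obtain ⟨u, u', hru, hu'C, huu'⟩ := hL3 r hr.2
        have huK : u ∈ K := by rw [hKeq]; exact hru.symm
        have hru' : RW Gy K r u := by
          have h := hru.restrict
          rw [← comp_rep hru.symm, ← hKeq] at h
          exact h
        have step1 : RW G T x u := (hxr'.trans hru').mono hGyG hKT
        have step2 : RW G T u u' := RW.adj huu' (hKT huK) (hCT hu'C)
        exact (step1.trans step2).trans (hCcase u' hu'C)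
      have hall : ∀ x ∈ T, RW G T x c := by
        intro x hx
        rcases hx with (hx | hx) | hx
        · exact hKcase K₁ r₁ hr₁ hK₁eq (hK₁T) x hx
        · exact hCcase x hx
        · exact hKcase K₂ r₂ hr₂ hK₂eq hK₂T x hx
      rw [SimpleGraph.connected_iff]
      constructor
      · rintro ⟨x, hx⟩ ⟨z, hz⟩
        obtain ⟨hx', hc', hr⟩ := hall x hx
        obtain ⟨hz', hc'', hr'⟩ := hall z hz
        exact hr.trans hr'.symm
      · exact ⟨⟨c, hCT hcC⟩⟩
  · -- backward
    rintro ⟨B₁, hB₁, B₂, hB₂, hne, hB₁A, hB₂A, _⟩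
    obtain ⟨r₁, hr₁, hB₁eq⟩ := (mem_comps_iff).mp hB₁
    obtain ⟨r₂, hr₂, hB₂eq⟩ := (mem_comps_iff).mp hB₂
    have hr₁B : r₁ ∈ B₁ := by rw [hB₁eq]; exact RW.refl hr₁
    have hr₂B : r₂ ∈ B₂ := by rw [hB₂eq]; exact RW.refl hr₂
    have hr₁AC : r₁ ∈ A \ C := ⟨hB₁A hr₁B, ((hF'eq r₁).mp hr₁.1).2⟩
    have hr₂AC : r₂ ∈ A \ C := ⟨hB₂A hr₂B, ((hF'eq r₂).mp hr₂.1).2⟩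
    refine ⟨r₁, r₂, hr₁AC, hr₂AC, B₁, ?_, B₂, ?_, hne, hr₁B, hr₂B⟩
    · exact (mem_comps_iff).mpr ⟨r₁, ⟨hAF hr₁AC.1, hr₁AC⟩, by rw [hB₁eq, hL2 r₁ hr₁AC]⟩
    · exact (mem_comps_iff).mpr ⟨r₂, ⟨hAF hr₂AC.1, hr₂AC⟩, by rw [hB₂eq, hL2 r₂ hr₂AC]⟩
end

section
/- Let C ∈ S_y(ŷ₋) and let A be the unique element of S(y ∩ N(C)) with C ⊆ A. Then |S((y⊖C) ∩ N(C))| > |S(y ∩ N(C))| if and only if the segment graph of y on A \ C has at least two connected components, i.e., there exist v₀, v_k ∈ A \ C lying in distinct connected components of the segment graph of y on A \ C. -/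
namespace Stmt12Aux

open SimpleGraph

variable {V : Type*} {H : SimpleGraph V} {S T : Set V} {v w : V}

/-- The component-set of `v` in the induced graph on `S`. -/
def cset (H : SimpleGraph V) (S : Set V) (v : V) : Set V :=
  {w | ∃ (hw : w ∈ S) (hv : v ∈ S), (H.induce S).Reachable ⟨w, hw⟩ ⟨v, hv⟩}

lemma cset_subset : cset H S v ⊆ S := fun _ hw => hw.1

lemma mem_cset_self (hv : v ∈ S) : v ∈ cset H S v := ⟨hv, hv, Reachable.refl _⟩

lemma cset_eq_of_mem (hw : w ∈ cset H S v) : cset H S w = cset H S v := by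
  obtain ⟨hw, hv, hr⟩ := hw
  ext u
  constructor
  · rintro ⟨hu, hx, hr2⟩; exact ⟨hu, hv, hr2.trans hr⟩
  · rintro ⟨hu, hx, hr2⟩; exact ⟨hu, hw, hr2.trans hr.symm⟩

lemma cset_eq_image (hv : v ∈ S) :
    Subtype.val '' ((H.induce S).connectedComponentMk ⟨v, hv⟩).supp = cset H S v := by
  ext w
  constructor
  · rintro ⟨⟨w, hw⟩, hmem, rfl⟩
    rw [ConnectedComponent.mem_supp_iff, ConnectedComponent.eq] at hmem
    exact ⟨hw, hv, hmem⟩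
  · rintro ⟨hw, hv', hr⟩
    exact ⟨⟨w, hw⟩, by rwa [ConnectedComponent.mem_supp_iff, ConnectedComponent.eq], rfl⟩

lemma comps_eq : comps H S = {B | ∃ v, ∃ _ : v ∈ S, B = cset H S v} := by
  ext B
  constructor
  · rintro ⟨K, rfl⟩
    obtain ⟨⟨v, hv⟩, rfl⟩ := K.exists_rep
    exact ⟨v, hv, cset_eq_image hv⟩
  · rintro ⟨v, hv, rfl⟩
    exact ⟨(H.induce S).connectedComponentMk ⟨v, hv⟩, (cset_eq_image hv).symm⟩

lemma mem_comps (hv : v ∈ S) : cset H S v ∈ comps H S := by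
  rw [comps_eq]; exact ⟨v, hv, rfl⟩

lemma comps_nonempty {B : Set V} (hB : B ∈ comps H S) : B.Nonempty := by
  rw [comps_eq] at hB
  obtain ⟨v, hv, rfl⟩ := hB
  exact ⟨v, mem_cset_self hv⟩

lemma comps_congr {H₁ H₂ : SimpleGraph V} (S : Set V)
    (h : ∀ a ∈ S, ∀ b ∈ S, (H₁.Adj a b ↔ H₂.Adj a b)) : comps H₁ S = comps H₂ S := by
  have he : H₁.induce S = H₂.induce S := by
    ext a b
    exact h a a.2 b b.2
  unfold comps
  rw [he]

/-- Walks in `induce S` ending in a set `T` closed under `S`-adjacency stay in `T`. -/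
lemma walk_transfer (hcl : ∀ a ∈ T, ∀ b ∈ S, H.Adj a b → b ∈ T) :
    ∀ (a b : ↥S) (_ : (H.induce S).Walk a b) (hb : b.val ∈ T),
      ∃ ha : a.val ∈ T, (H.induce T).Reachable ⟨a.val, ha⟩ ⟨b.val, hb⟩ := by
  intro a b p
  induction p with
  | nil => intro hb; exact ⟨hb, Reachable.refl _⟩
  | @cons a c b h p ih =>
    intro hb
    obtain ⟨hc, hr⟩ := ih hb
    have hadj : H.Adj a.val c.val := h
    have ha : a.val ∈ T := hcl c.val hc a.val a.2 hadj.symm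
    exact ⟨ha, (Adj.reachable (by exact hadj : (H.induce T).Adj ⟨a.val, ha⟩ ⟨c.val, hc⟩)).trans hr⟩

lemma reach_up (hTS : T ⊆ S) :
    ∀ (a b : ↥T) (_ : (H.induce T).Walk a b),
      (H.induce S).Reachable ⟨a.val, hTS a.2⟩ ⟨b.val, hTS b.2⟩ := by
  intro a b p
  induction p with
  | nil => exact Reachable.refl _
  | @cons a c b h p ih =>
    have hadj : H.Adj a.val c.val := h
    exact (Adj.reachable (by exact hadj :
      (H.induce S).Adj ⟨a.val, hTS a.2⟩ ⟨c.val, hTS c.2⟩)).trans ih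

/-- If `T ⊆ S` is closed under `S`-adjacency and `v ∈ T`, the component of `v`
in `induce T` equals its component in `induce S`. -/
lemma cset_transfer (hTS : T ⊆ S) (hcl : ∀ a ∈ T, ∀ b ∈ S, H.Adj a b → b ∈ T)
    (hv : v ∈ T) : cset H T v = cset H S v := by
  ext w
  constructor
  · rintro ⟨hw, hx, hr⟩
    obtain ⟨p⟩ := hr
    exact ⟨hTS hw, hTS hv, reach_up hTS _ _ p⟩
  · rintro ⟨hw, hv2, hr⟩
    obtain ⟨p⟩ := hr
    obtain ⟨hwT, hr2⟩ := walk_transfer hcl _ _ p hv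
    exact ⟨hwT, hv, hr2⟩

lemma cset_closed (hv : v ∈ S) :
    ∀ a ∈ cset H S v, ∀ b ∈ S, H.Adj a b → b ∈ cset H S v := by
  rintro a ⟨ha, hx, hr⟩ b hb hadj
  exact ⟨hb, hv, (Adj.reachable (by exact hadj.symm :
    (H.induce S).Adj ⟨b, hb⟩ ⟨a, ha⟩)).trans hr⟩

/-- Decomposition: components of `S \ C`, where `C` sits inside the component `A` of `a`. -/
lemma comps_split (H : SimpleGraph V) {S C : Set V} {a : V} (ha : a ∈ S)
    (hCA : C ⊆ cset H S a) :
    comps H (S \ C) = (comps H S \ {cset H S a}) ∪ comps H (cset H S a \ C) := by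
  set A := cset H S a with hAdef
  have hAS : A ⊆ S := cset_subset
  have hAcl : ∀ x ∈ A, ∀ b ∈ S, H.Adj x b → b ∈ A := cset_closed ha
  -- S \ A is closed in S
  have hSAcl : ∀ x ∈ S \ A, ∀ b ∈ S, H.Adj x b → b ∈ S \ A := by
    rintro x ⟨hxS, hxA⟩ b hb hadj
    refine ⟨hb, fun hbA => hxA ?_⟩
    exact hAcl b hbA x hxS hadj.symm
  have hSC : S \ C ⊆ S := Set.diff_subset
  -- S \ A ⊆ S \ C
  have hSAsub : S \ A ⊆ S \ C := fun x ⟨hxS, hxA⟩ => ⟨hxS, fun hxC => hxA (hCA hxC)⟩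
  -- S \ A closed in S \ C
  have hSAcl' : ∀ x ∈ S \ A, ∀ b ∈ S \ C, H.Adj x b → b ∈ S \ A :=
    fun x hx b hb hadj => hSAcl x hx b hb.1 hadj
  -- A \ C closed in S \ C
  have hACsub : A \ C ⊆ S \ C := fun x ⟨hxA, hxC⟩ => ⟨hAS hxA, hxC⟩
  have hACcl : ∀ x ∈ A \ C, ∀ b ∈ S \ C, H.Adj x b → b ∈ A \ C :=
    fun x hx b hb hadj => ⟨hAcl x hx.1 b hb.1 hadj, hb.2⟩
  ext B
  constructor
  · intro hB
    rw [comps_eq] at hB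
    obtain ⟨v, hv, rfl⟩ := hB
    by_cases hvA : v ∈ A
    · right
      rw [← cset_transfer hACsub hACcl ⟨hvA, hv.2⟩]
      exact mem_comps ⟨hvA, hv.2⟩
    · left
      have h1 : cset H (S \ C) v = cset H (S \ A) v :=
        (cset_transfer hSAsub hSAcl' ⟨hv.1, hvA⟩).symm
      have h2 : cset H (S \ A) v = cset H S v :=
        cset_transfer Set.diff_subset hSAcl ⟨hv.1, hvA⟩
      rw [h1, h2]
      refine ⟨mem_comps hv.1, fun hne => ?_⟩
      simp only [Set.mem_singleton_iff] at hne
      exact hvA (hne ▸ mem_cset_self hv.1)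
  · rintro (⟨hB, hBne⟩ | hB)
    · rw [comps_eq] at hB
      obtain ⟨v, hv, rfl⟩ := hB
      have hvA : v ∉ A := by
        intro hvA
        exact hBne (by rw [Set.mem_singleton_iff]; exact cset_eq_of_mem hvA)
      have h2 : cset H (S \ A) v = cset H S v :=
        cset_transfer Set.diff_subset hSAcl ⟨hv, hvA⟩
      have h1 : cset H (S \ A) v = cset H (S \ C) v :=
        cset_transfer hSAsub hSAcl' ⟨hv, hvA⟩
      rw [← h2, h1]
      exact mem_comps ⟨hv, fun hvC => hvA (hCA hvC)⟩
    · rw [comps_eq] at hB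
      obtain ⟨v, hv, rfl⟩ := hB
      rw [cset_transfer hACsub hACcl hv]
      exact mem_comps (hACsub hv)

lemma comps_subset {B : Set V} (hB : B ∈ comps H S) : B ⊆ S := by
  rw [comps_eq] at hB
  obtain ⟨v, hv, rfl⟩ := hB
  exact cset_subset

lemma comps_eq_of_mem {B1 B2 : Set V} (h1 : B1 ∈ comps H S) (h2 : B2 ∈ comps H S)
    {x : V} (hx1 : x ∈ B1) (hx2 : x ∈ B2) : B1 = B2 := by
  rw [comps_eq] at h1 h2
  obtain ⟨v, hv, rfl⟩ := h1
  obtain ⟨w, hw, rfl⟩ := h2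
  rw [← cset_eq_of_mem hx1, ← cset_eq_of_mem hx2]

end Stmt12Aux


/-- Let `C ∈ S_y(ŷ₋)` and let `A` be the unique element of
`S(y ∩ N(C))` with `C ⊆ A`.  Then `|S((y⊖C) ∩ N(C))| > |S(y ∩ N(C))|` iff the
segment graph of `y` on `A \ C` has at least two connected components, i.e. there
exist `v₀, vₖ ∈ A \ C` lying in distinct connected components of the segment graph
of `y` on `A \ C`. -/
theorem stmt12 {V : Type*} [Fintype V] (G : SimpleGraph V) (y yhat : V → ℕ)
    (C : Set V) (hC : C ∈ maskCompsNeg G y yhat)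
    (A : Set V) (hA : A ∈ segComps G y (nbhd G C)) (hCA : C ⊆ A) :
    Nat.card ↥(segComps G (removeLbl y C) (nbhd G C))
        > Nat.card ↥(segComps G y (nbhd G C)) ↔
      ∃ v₀ vₖ : V, v₀ ∈ A \ C ∧ vₖ ∈ A \ C ∧
        ∃ K₁ ∈ segComps G y (A \ C), ∃ K₂ ∈ segComps G y (A \ C),
          K₁ ≠ K₂ ∧ v₀ ∈ K₁ ∧ vₖ ∈ K₂ := by
  classical
  set W := nbhd G C with hWdef
  set H := segGraph G y with hHdef
  set Sf : Set V := {i | y i ≠ 0} ∩ W with hSfdef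
  have hA' : A ∈ comps H Sf := hA
  rw [Stmt12Aux.comps_eq] at hA'
  obtain ⟨a, ha, hAeq⟩ := hA'
  have hAmem : A ∈ comps H Sf := hA
  have hASf : A ⊆ Sf := Stmt12Aux.comps_subset hAmem
  -- Step 1: the vertex set of the removed labeling
  have hset : {i | removeLbl y C i ≠ 0} ∩ W = Sf \ C := by
    ext i
    simp only [Set.mem_inter_iff, Set.mem_setOf_eq, Set.mem_diff, removeLbl,
      Set.indicator_apply, Set.mem_compl_iff, hSfdef]
    by_cases hiC : i ∈ C <;> simp [hiC]
  -- Step 2: the segment graphs agree away from C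
  have hcongr : comps (segGraph G (removeLbl y C)) (Sf \ C) = comps H (Sf \ C) := by
    apply Stmt12Aux.comps_congr
    intro p hp q hq
    have hp' : removeLbl y C p = y p := Set.indicator_of_mem (show p ∈ Cᶜ from hp.2) y
    have hq' : removeLbl y C q = y q := Set.indicator_of_mem (show q ∈ Cᶜ from hq.2) y
    show G.Adj p q ∧ removeLbl y C p = removeLbl y C q ↔ G.Adj p q ∧ y p = y q
    rw [hp', hq']
  have hL : segComps G (removeLbl y C) W = comps H (Sf \ C) := by
    show comps (segGraph G (removeLbl y C)) ({i | removeLbl y C i ≠ 0} ∩ W) = _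
    rw [hset, hcongr]
  -- Step 3: split the components
  have hCA' : C ⊆ Stmt12Aux.cset H Sf a := hAeq ▸ hCA
  have hsplit := Stmt12Aux.comps_split H ha hCA'
  rw [← hAeq] at hsplit
  -- Step 4: cardinalities
  have hdisj : Disjoint (comps H Sf \ {A}) (comps H (A \ C)) := by
    rw [Set.disjoint_left]
    rintro B ⟨hB1, hBne⟩ hB2
    apply hBne
    have hsub : B ⊆ A := (Stmt12Aux.comps_subset hB2).trans Set.diff_subset
    obtain ⟨x, hx⟩ := Stmt12Aux.comps_nonempty hB2
    exact Set.mem_singleton_iff.mpr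
      (Stmt12Aux.comps_eq_of_mem hB1 hAmem hx (hsub hx))
  have hcard1 : (comps H (Sf \ C)).ncard
      = (comps H Sf \ {A}).ncard + (comps H (A \ C)).ncard := by
    rw [hsplit, Set.ncard_union_eq hdisj (Set.toFinite _) (Set.toFinite _)]
  have hcard2 : (comps H Sf \ {A}).ncard + 1 = (comps H Sf).ncard :=
    Set.ncard_diff_singleton_add_one hAmem (Set.toFinite _)
  have hgoalL : Nat.card ↥(segComps G (removeLbl y C) W) = (comps H (Sf \ C)).ncard := by
    rw [hL, Nat.card_coe_set_eq]
  have hgoalR : Nat.card ↥(segComps G y W) = (comps H Sf).ncard := by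
    rw [show segComps G y W = comps H Sf from rfl, Nat.card_coe_set_eq]
  -- Step 5: the components on A \ C
  have hseg : segComps G y (A \ C) = comps H (A \ C) := by
    show comps H ({i | y i ≠ 0} ∩ (A \ C)) = comps H (A \ C)
    rw [Set.inter_eq_self_of_subset_right
      (fun x hx => (hASf (Set.diff_subset hx)).1)]
  rw [gt_iff_lt, hgoalR, hgoalL]
  constructor
  · intro h
    have h1k : 1 < (comps H (A \ C)).ncard := by omega
    rw [Set.one_lt_ncard_iff (Set.toFinite _)] at h1k
    obtain ⟨K₁, K₂, hK1, hK2, hne⟩ := h1k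
    obtain ⟨v₀, hv₀⟩ := Stmt12Aux.comps_nonempty hK1
    obtain ⟨vₖ, hvₖ⟩ := Stmt12Aux.comps_nonempty hK2
    exact ⟨v₀, vₖ, Stmt12Aux.comps_subset hK1 hv₀, Stmt12Aux.comps_subset hK2 hvₖ,
      K₁, hseg ▸ hK1, K₂, hseg ▸ hK2, hne, hv₀, hvₖ⟩
  · rintro ⟨v₀, vₖ, hv₀, hvₖ, K₁, hK1, K₂, hK2, hne, hv₀K, hvₖK⟩
    rw [hseg] at hK1 hK2
    have h1k : 1 < (comps H (A \ C)).ncard :=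
      (Set.one_lt_ncard_iff (Set.toFinite _)).mpr ⟨K₁, K₂, hK1, hK2, hne⟩
    omega
end

section
/- Let C ∈ S_y(ŷ₋) and let A ∈ S(y) with C ⊆ A. Then A = C if and only if no vertex of D(C) = N(C) \ C belongs to A. -/
/-- Let `C ∈ S_y(ŷ₋)` and let `A ∈ S(y)` with `C ⊆ A`.  Then `A = C`
iff no vertex of `D(C) = N(C) \ C` belongs to `A`. -/
theorem stmt13 {V : Type*} [Fintype V] (G : SimpleGraph V) (y yhat : V → ℕ)
    (C : Set V) (hC : C ∈ maskCompsNeg G y yhat)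
    (A : Set V) (hA : A ∈ segComps G y Set.univ) (hCA : C ⊆ A) :
    A = C ↔ ∀ i ∈ nbhd G C \ C, i ∉ A := by
  constructor
  · rintro rfl i hi
    exact hi.2
  · intro hD
    refine Set.Subset.antisymm ?_ hCA
    obtain ⟨K, rfl⟩ := hA
    obtain ⟨KC, hCeq⟩ := hC
    obtain ⟨c0, hc0⟩ := KC.exists_rep
    have hc0C : (c0 : V) ∈ C := hCeq ▸ ⟨c0, hc0, rfl⟩
    obtain ⟨c, hcK, hcval⟩ := hCA hc0C
    have key : ∀ (u v : ({i | y i ≠ 0} ∩ Set.univ : Set V)),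
        ((segGraph G y).induce _).Walk u v → u ∈ K.supp → (u : V) ∈ C → (v : V) ∈ C := by
      intro u v w
      induction w with
      | nil => exact fun _ h => h
      | @cons a b d hh p ih =>
        intro haK haC
        have hbK : b ∈ K.supp := by
          rw [SimpleGraph.ConnectedComponent.mem_supp_iff] at haK ⊢
          rw [← haK]
          exact SimpleGraph.ConnectedComponent.sound hh.symm.reachable
        apply ih hbK
        by_contra hbC
        exact hD (b : V) ⟨Or.inr ⟨a, haC, ((And.left hh).symm : G.Adj _ _)⟩, hbC⟩ ⟨b, hbK, rfl⟩
    rintro x ⟨x', hx'K, rfl⟩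
    have hreach : ((segGraph G y).induce _).Reachable c x' := by
      rw [SimpleGraph.ConnectedComponent.mem_supp_iff] at hx'K hcK
      exact SimpleGraph.ConnectedComponent.exact (hcK.trans hx'K.symm)
    obtain ⟨w⟩ := hreach
    exact key c x' w hcK (hcval ▸ hc0C)
end

section
/- Let C ∈ S_y(ŷ₋), let A ∈ S(y) with C ⊆ A, and let B₁, B₂ ∈ S(y⊖ŷ₋) be distinct with B₁, B₂ ⊆ A. Then the subgraph of G induced on B₁ ∪ C ∪ B₂ is connected if and only if there exist vertices i, j ∈ D(C) = N(C) \ C with i ∈ B₁ and j ∈ B₂. -/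
section Aux14

open SimpleGraph

variable {V : Type*}

lemma mem_val_image14 {S : Set V} {K : Set ↥S} {x : V} :
    x ∈ Subtype.val '' K ↔ ∃ hx : x ∈ S, (⟨x, hx⟩ : ↥S) ∈ K := by
  constructor
  · rintro ⟨⟨x', hx'⟩, hmem, rfl⟩; exact ⟨hx', hmem⟩
  · rintro ⟨hx, h⟩; exact ⟨⟨x, hx⟩, h, rfl⟩

lemma seg_label_const14 (G : SimpleGraph V) (y : V → ℕ) (S : Set V)
    {u v : ↥S} (h : ((segGraph G y).induce S).Reachable u v) : y u.1 = y v.1 := by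
  obtain ⟨p⟩ := h
  induction p with
  | nil => rfl
  | cons hab p ih => exact hab.2.trans ih

lemma comp_reach14 {G H : SimpleGraph V} (hHG : ∀ a b, H.Adj a b → G.Adj a b)
    {S T : Set V} (K : (H.induce S).ConnectedComponent)
    (hKT : ∀ x : ↥S, x ∈ K.supp → x.1 ∈ T)
    {u v : ↥S} (hu : u ∈ K.supp) (hv : v ∈ K.supp)
    (hut : u.1 ∈ T) (hvt : v.1 ∈ T) :
    (G.induce T).Reachable ⟨u.1, hut⟩ ⟨v.1, hvt⟩ := by
  have hreach : (H.induce S).Reachable u v := by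
    rw [SimpleGraph.ConnectedComponent.mem_supp_iff] at hu hv
    exact SimpleGraph.ConnectedComponent.exact (hu.trans hv.symm)
  obtain ⟨p⟩ := hreach
  suffices h : ∀ (a b : ↥S), (H.induce S).Walk a b → b ∈ K.supp →
      ∀ (hat : a.1 ∈ T) (hbt : b.1 ∈ T),
      (G.induce T).Reachable ⟨a.1, hat⟩ ⟨b.1, hbt⟩ from h u v p hv hut hvt
  intro a b p
  induction p with
  | nil => intro _ hat hbt; exact SimpleGraph.Reachable.refl _
  | @cons x y z hxy p ih =>
    intro hz hxt hzt
    have hy : y ∈ K.supp := by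
      rw [SimpleGraph.ConnectedComponent.mem_supp_iff] at hz ⊢
      exact (SimpleGraph.ConnectedComponent.sound ⟨p⟩).trans hz
    have hyt : y.1 ∈ T := hKT y hy
    have hadj : (G.induce T).Adj ⟨x.1, hxt⟩ ⟨y.1, hyt⟩ := hHG _ _ hxy
    exact hadj.reachable.trans (ih hz hyt hzt)

lemma walk_exit14 (G : SimpleGraph V) {T X : Set V} {u v : ↥T}
    (p : (G.induce T).Walk u v) (hu : u.1 ∈ X) (hv : v.1 ∉ X) :
    ∃ i ∈ X, ∃ c ∈ T \ X, G.Adj i c := by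
  suffices h : ∀ (a b : ↥T), (G.induce T).Walk a b → a.1 ∈ X → b.1 ∉ X →
      ∃ i ∈ X, ∃ c ∈ T \ X, G.Adj i c from h u v p hu hv
  intro a b p
  induction p with
  | nil => intro ha hb; exact absurd ha hb
  | @cons x y z hxy p ih =>
    intro hx hz
    by_cases hy : y.1 ∈ X
    · exact ih hy hz
    · exact ⟨x.1, hx, y.1, ⟨y.2, hy⟩, hxy⟩

end Aux14

/-- Let `C ∈ S_y(ŷ₋)`, let `A ∈ S(y)` with `C ⊆ A`, and let
`B₁, B₂ ∈ S(y⊖ŷ₋)` be distinct with `B₁, B₂ ⊆ A`.  Then the subgraph of `G` induced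
on `B₁ ∪ C ∪ B₂` is connected iff there exist vertices `i, j ∈ D(C) = N(C) \ C`
with `i ∈ B₁` and `j ∈ B₂`. -/
theorem stmt14 {V : Type*} [Fintype V] (G : SimpleGraph V) (y yhat : V → ℕ)
    (C : Set V) (hC : C ∈ maskCompsNeg G y yhat)
    (A : Set V) (hA : A ∈ segComps G y Set.univ) (hCA : C ⊆ A)
    (B₁ B₂ : Set V)
    (hB₁ : B₁ ∈ segComps G (removeLbl y (fnMask y yhat)) Set.univ)
    (hB₂ : B₂ ∈ segComps G (removeLbl y (fnMask y yhat)) Set.univ)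
    (hne : B₁ ≠ B₂) (hB₁A : B₁ ⊆ A) (hB₂A : B₂ ⊆ A) :
    (G.induce (B₁ ∪ C ∪ B₂)).Connected ↔
      ∃ i ∈ nbhd G C \ C, ∃ j ∈ nbhd G C \ C, i ∈ B₁ ∧ j ∈ B₂ := by
  classical
  obtain ⟨KC, hCeq⟩ := hC
  obtain ⟨KA, hAeq⟩ := hA
  obtain ⟨K1, hB1eq⟩ := hB₁
  obtain ⟨K2, hB2eq⟩ := hB₂
  have hB1mem : ∀ x ∈ B₁, ∃ hx : x ∈ {i | (removeLbl y (fnMask y yhat)) i ≠ 0} ∩ Set.univ,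
      (⟨x, hx⟩ : ↥({i | (removeLbl y (fnMask y yhat)) i ≠ 0} ∩ Set.univ)) ∈ K1.supp := by
    intro x hx; rw [hB1eq] at hx; exact mem_val_image14.mp hx
  have hB2mem : ∀ x ∈ B₂, ∃ hx : x ∈ {i | (removeLbl y (fnMask y yhat)) i ≠ 0} ∩ Set.univ,
      (⟨x, hx⟩ : ↥({i | (removeLbl y (fnMask y yhat)) i ≠ 0} ∩ Set.univ)) ∈ K2.supp := by
    intro x hx; rw [hB2eq] at hx; exact mem_val_image14.mp hx
  have hCmem : ∀ x ∈ C, ∃ hx : x ∈ (fnMask y yhat), (⟨x, hx⟩ : ↥(fnMask y yhat)) ∈ KC.supp := by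
    intro x hx; rw [hCeq] at hx; exact mem_val_image14.mp hx
  have hB1M : ∀ x ∈ B₁, x ∉ (fnMask y yhat) ∧ (removeLbl y (fnMask y yhat)) x = y x := by
    intro x hx
    obtain ⟨hxS, -⟩ := hB1mem x hx
    have hne0 : (removeLbl y (fnMask y yhat)) x ≠ 0 := hxS.1
    by_cases hxM : x ∈ (fnMask y yhat)
    · exact absurd (by simp [removeLbl, Set.indicator_of_notMem, hxM]) hne0
    · exact ⟨hxM, by simp [removeLbl, Set.indicator_of_mem, hxM]⟩
  have hB2M : ∀ x ∈ B₂, x ∉ (fnMask y yhat) ∧ (removeLbl y (fnMask y yhat)) x = y x := by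
    intro x hx
    obtain ⟨hxS, -⟩ := hB2mem x hx
    have hne0 : (removeLbl y (fnMask y yhat)) x ≠ 0 := hxS.1
    by_cases hxM : x ∈ (fnMask y yhat)
    · exact absurd (by simp [removeLbl, Set.indicator_of_notMem, hxM]) hne0
    · exact ⟨hxM, by simp [removeLbl, Set.indicator_of_mem, hxM]⟩
  have hCM : ∀ x ∈ C, x ∈ (fnMask y yhat) := fun x hx => (hCmem x hx).choose
  have hB1C : ∀ x ∈ B₁, x ∉ C := fun x hx hc => (hB1M x hx).1 (hCM x hc)
  have hB2C : ∀ x ∈ B₂, x ∉ C := fun x hx hc => (hB2M x hx).1 (hCM x hc)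
  have hB12 : ∀ x ∈ B₁, x ∉ B₂ := by
    intro x hx1 hx2
    obtain ⟨hS1, hk1⟩ := hB1mem x hx1
    obtain ⟨hS2, hk2⟩ := hB2mem x hx2
    rw [SimpleGraph.ConnectedComponent.mem_supp_iff] at hk1 hk2
    exact hne (by rw [hB1eq, hB2eq, ← hk1, ← hk2])
  have hAlab : ∀ a ∈ A, ∀ b ∈ A, y a = y b := by
    intro a ha b hb
    rw [hAeq] at ha hb
    obtain ⟨haS, hka⟩ := mem_val_image14.mp ha
    obtain ⟨hbS, hkb⟩ := mem_val_image14.mp hb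
    rw [SimpleGraph.ConnectedComponent.mem_supp_iff] at hka hkb
    exact seg_label_const14 G y _
      (SimpleGraph.ConnectedComponent.exact (hka.trans hkb.symm))
  have hNoEdge : ∀ i ∈ B₁, ∀ j ∈ B₂, ¬ G.Adj i j := by
    intro i hi j hj hadj
    obtain ⟨hSi, hki⟩ := hB1mem i hi
    obtain ⟨hSj, hkj⟩ := hB2mem j hj
    have hyij : y i = y j := hAlab i (hB₁A hi) j (hB₂A hj)
    have hadj' : ((segGraph G (removeLbl y (fnMask y yhat))).induce ({i | (removeLbl y (fnMask y yhat)) i ≠ 0} ∩ Set.univ)).Adj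
        ⟨i, hSi⟩ ⟨j, hSj⟩ := by
      refine ⟨hadj, ?_⟩
      show (removeLbl y (fnMask y yhat)) i = (removeLbl y (fnMask y yhat)) j
      rw [(hB1M i hi).2, (hB2M j hj).2]; exact hyij
    rw [SimpleGraph.ConnectedComponent.mem_supp_iff] at hki hkj
    have hK : K1 = K2 := by
      rw [← hki, ← hkj]; exact SimpleGraph.ConnectedComponent.sound hadj'.reachable
    exact hne (by rw [hB1eq, hB2eq, hK])
  have hB1T : ∀ x ∈ B₁, x ∈ B₁ ∪ C ∪ B₂ := fun x hx => Or.inl (Or.inl hx)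
  have hCT : ∀ x ∈ C, x ∈ B₁ ∪ C ∪ B₂ := fun x hx => Or.inl (Or.inr hx)
  have hB2T : ∀ x ∈ B₂, x ∈ B₁ ∪ C ∪ B₂ := fun x hx => Or.inr hx
  constructor
  · intro hconn
    obtain ⟨b1s, hb1s⟩ := K1.exists_rep
    obtain ⟨b2s, hb2s⟩ := K2.exists_rep
    have hb1 : b1s.1 ∈ B₁ := by
      rw [hB1eq]
      exact ⟨b1s, (SimpleGraph.ConnectedComponent.mem_supp_iff _ _).mpr hb1s, rfl⟩
    have hb2 : b2s.1 ∈ B₂ := by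
      rw [hB2eq]
      exact ⟨b2s, (SimpleGraph.ConnectedComponent.mem_supp_iff _ _).mpr hb2s, rfl⟩
    obtain ⟨p⟩ := hconn.preconnected ⟨b1s.1, hB1T _ hb1⟩ ⟨b2s.1, hB2T _ hb2⟩
    have hb2n1 : b2s.1 ∉ B₁ := fun h => hB12 _ h hb2
    have hb1n2 : b1s.1 ∉ B₂ := fun h => hB12 _ hb1 h
    obtain ⟨i, hiB1, c, ⟨hcT, hcB1⟩, hic⟩ := walk_exit14 G p hb1 hb2n1
    obtain ⟨j, hjB2, d, ⟨hdT, hdB2⟩, hjd⟩ := walk_exit14 G p.reverse hb2 hb1n2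
    have hcC : c ∈ C := by
      rcases hcT with (h1 | h1) | h1
      · exact absurd h1 hcB1
      · exact h1
      · exact absurd hic (hNoEdge i hiB1 c h1)
    have hdC : d ∈ C := by
      rcases hdT with (h1 | h1) | h1
      · exact absurd hjd.symm (hNoEdge d h1 j hjB2)
      · exact h1
      · exact absurd h1 hdB2
    exact ⟨i, ⟨Or.inr ⟨c, hcC, hic⟩, hB1C i hiB1⟩, j, ⟨Or.inr ⟨d, hdC, hjd⟩, hB2C j hjB2⟩,
      hiB1, hjB2⟩
  · rintro ⟨i, ⟨hiN, hiC⟩, j, ⟨hjN, hjC⟩, hiB1, hjB2⟩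
    obtain ⟨c₁, hc₁C, hic₁⟩ : ∃ c ∈ C, G.Adj i c := by
      rcases hiN with h | h
      · exact absurd h hiC
      · exact h
    obtain ⟨c₂, hc₂C, hjc₂⟩ : ∃ c ∈ C, G.Adj j c := by
      rcases hjN with h | h
      · exact absurd h hjC
      · exact h
    have hc₁T : c₁ ∈ B₁ ∪ C ∪ B₂ := hCT _ hc₁C
    have hc₂T : c₂ ∈ B₁ ∪ C ∪ B₂ := hCT _ hc₂C
    have hK1T : ∀ x : ↥({i | (removeLbl y (fnMask y yhat)) i ≠ 0} ∩ Set.univ), x ∈ K1.supp → x.1 ∈ B₁ ∪ C ∪ B₂ := by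
      intro x hx; apply hB1T; rw [hB1eq]; exact ⟨x, hx, rfl⟩
    have hK2T : ∀ x : ↥({i | (removeLbl y (fnMask y yhat)) i ≠ 0} ∩ Set.univ), x ∈ K2.supp → x.1 ∈ B₁ ∪ C ∪ B₂ := by
      intro x hx; apply hB2T; rw [hB2eq]; exact ⟨x, hx, rfl⟩
    have hKCT : ∀ x : ↥(fnMask y yhat), x ∈ KC.supp → x.1 ∈ B₁ ∪ C ∪ B₂ := by
      intro x hx; apply hCT; rw [hCeq]; exact ⟨x, hx, rfl⟩
    have hseg1 : ∀ a b : V, (segGraph G (removeLbl y (fnMask y yhat))).Adj a b → G.Adj a b := fun _ _ h => h.1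
    have hsegy : ∀ a b : V, (segGraph G y).Adj a b → G.Adj a b := fun _ _ h => h.1
    have hreach : ∀ u : ↥(B₁ ∪ C ∪ B₂), (G.induce (B₁ ∪ C ∪ B₂)).Reachable u ⟨c₁, hc₁T⟩ := by
      rintro ⟨x, hx⟩
      have creach : ∀ a ∈ C, ∀ b ∈ C, ∀ (hat : a ∈ B₁ ∪ C ∪ B₂) (hbt : b ∈ B₁ ∪ C ∪ B₂),
          (G.induce (B₁ ∪ C ∪ B₂)).Reachable ⟨a, hat⟩ ⟨b, hbt⟩ := by
        intro a ha b hb hat hbt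
        obtain ⟨hSa, hka⟩ := hCmem a ha
        obtain ⟨hSb, hkb⟩ := hCmem b hb
        exact comp_reach14 hsegy KC hKCT hka hkb hat hbt
      rcases hx with (hx1 | hx1) | hx1
      · obtain ⟨hSx, hkx⟩ := hB1mem x hx1
        obtain ⟨hSi, hki⟩ := hB1mem i hiB1
        have r1 : (G.induce (B₁ ∪ C ∪ B₂)).Reachable ⟨x, hB1T _ hx1⟩ ⟨i, hB1T _ hiB1⟩ :=
          comp_reach14 hseg1 K1 hK1T hkx hki _ _
        have step : (G.induce (B₁ ∪ C ∪ B₂)).Adj ⟨i, hB1T _ hiB1⟩ ⟨c₁, hc₁T⟩ := hic₁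
        exact r1.trans step.reachable
      · exact creach x hx1 c₁ hc₁C _ _
      · obtain ⟨hSx, hkx⟩ := hB2mem x hx1
        obtain ⟨hSj, hkj⟩ := hB2mem j hjB2
        have r1 : (G.induce (B₁ ∪ C ∪ B₂)).Reachable ⟨x, hB2T _ hx1⟩ ⟨j, hB2T _ hjB2⟩ :=
          comp_reach14 hseg1 K2 hK2T hkx hkj _ _
        have step : (G.induce (B₁ ∪ C ∪ B₂)).Adj ⟨j, hB2T _ hjB2⟩ ⟨c₂, hc₂T⟩ := hjc₂
        exact (r1.trans step.reachable).trans (creach c₂ hc₂C c₁ hc₁C _ _)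
    have hnemp : Nonempty ↥(B₁ ∪ C ∪ B₂) := ⟨⟨c₁, hc₁T⟩⟩
    exact SimpleGraph.Connected.mk (fun u v => (hreach u).trans (hreach v).symm)
end
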